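/- Deterministic-case converse (degenerate variance): if V(X|Y)_P = 0, then any ε-correct one-way IR code on the n-fold i.i.d. distribution (P_{XY})^{×n} satisfies log|M| ≥ n H(X|Y)_P + log(1-ε). -/

import Mathlib

/-!
Zero variance means that on the support of `P` the conditional probability `P(x|y)` is the
constant `exp (-H(X|Y))`, so every conditional probability of `xⁿ` given `yⁿ` is at most
`exp (-n H(X|Y))`. Given `yⁿ` and a syndrome, the decoder's guess is correct with probability
at most that much, and summing over the `|M|` syndromes bounds the success probability
by `|M| exp (-n H(X|Y))`.
-/

open scoped BigOperators
noncomputable section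

/-- Conditional entropy `H(X|Y)_P = Σ_{x,y} P(x,y) log(P_Y(y)/P(x,y))`. -/
def condH {X Y : Type*} [Fintype X] [Fintype Y] (P : X → Y → ℝ) : ℝ :=
  ∑ x, ∑ y, P x y * Real.log ((∑ x', P x' y) / P x y)

/-- Conditional entropy variance `V(X|Y)_P`. -/
def condV {X Y : Type*} [Fintype X] [Fintype Y] (P : X → Y → ℝ) : ℝ :=
  ∑ x, ∑ y, P x y * (Real.log ((∑ x', P x' y) / P x y) - condH P)^2

def successProb {A B M : Type*} [Fintype A] [Fintype B] [Fintype M] (Q : A → B → ℝ)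
    (e : A → M → ℝ) (d : B → M → A → ℝ) : ℝ :=
  ∑ a, ∑ b, ∑ m, Q a b * e a m * d b m a

theorem successProb_le_mul_card {A B M : Type*} [Fintype A] [Fintype B] [Fintype M]
    (Q : A → B → ℝ) (R : B → ℝ) (c : ℝ) (hQ0 : ∀ a b, 0 ≤ Q a b)
    (hQR : ∀ a b, Q a b ≤ c * R b) (hR1 : ∑ b, R b = 1)
    (e : A → M → ℝ) (he0 : ∀ a m, 0 ≤ e a m) (he1 : ∀ a, ∑ m, e a m = 1)
    (d : B → M → A → ℝ) (hd0 : ∀ b m a, 0 ≤ d b m a) (hd1 : ∀ b m, ∑ a, d b m a = 1) :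
    successProb Q e d ≤ c * Fintype.card M := by
  have he_le_one : ∀ a m, e a m ≤ 1 := fun a m =>
    he1 a ▸ Finset.single_le_sum (fun m' _ => he0 a m') (Finset.mem_univ m)
  calc successProb Q e d
      ≤ ∑ a, ∑ b, ∑ m, c * R b * d b m a := by
        unfold successProb
        gcongr ∑ a, ∑ b, ∑ m, ?_ with a _ b _ m _
        exact mul_le_mul_of_nonneg_right
          ((mul_le_of_le_one_right (hQ0 a b) (he_le_one a m)).trans (hQR a b)) (hd0 b m a)
    _ = ∑ b, c * R b * ∑ m, ∑ a, d b m a := by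
        rw [Finset.sum_comm]
        simp_rw [Finset.mul_sum]
        exact Finset.sum_congr rfl fun b _ => Finset.sum_comm
    _ = c * Fintype.card M := by
        simp_rw [hd1, Finset.sum_const, Finset.card_univ, nsmul_one, ← Finset.sum_mul,
          ← Finset.mul_sum, hR1, mul_one]

section ZeroVariance

variable {X Y : Type*} [Fintype X] [Fintype Y] {P : X → Y → ℝ}

theorem log_div_eq_condH_of_condV_eq_zero (hP0 : ∀ x y, 0 ≤ P x y) (hV : condV P = 0)
    {x : X} {y : Y} (hxy : 0 < P x y) :
    Real.log ((∑ x', P x' y) / P x y) = condH P := by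
  have hterm_nonneg : ∀ x y, 0 ≤ P x y * (Real.log ((∑ x', P x' y) / P x y) - condH P) ^ 2 :=
    fun x y => mul_nonneg (hP0 x y) (sq_nonneg _)
  have hrow : ∑ y, P x y * (Real.log ((∑ x', P x' y) / P x y) - condH P) ^ 2 = 0 :=
    congrFun ((Fintype.sum_eq_zero_iff_of_nonneg fun x =>
      Finset.sum_nonneg fun y _ => hterm_nonneg x y).mp hV) x
  have hterm := congrFun ((Fintype.sum_eq_zero_iff_of_nonneg (hterm_nonneg x)).mp hrow) y
  rw [Pi.zero_apply, mul_eq_zero, sq_eq_zero_iff, sub_eq_zero] at hterm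
  exact hterm.resolve_left hxy.ne'

theorem le_exp_neg_condH_mul_marginal (hP0 : ∀ x y, 0 ≤ P x y) (hV : condV P = 0)
    (x : X) (y : Y) : P x y ≤ Real.exp (-condH P) * ∑ x', P x' y := by
  have hmarg_nonneg : 0 ≤ ∑ x', P x' y := Finset.sum_nonneg fun x' _ => hP0 x' y
  rcases (hP0 x y).eq_or_lt with hzero | hpos
  · rw [← hzero]
    positivity
  have hmarg_pos : 0 < ∑ x', P x' y :=
    hpos.trans_le (Finset.single_le_sum (fun x' _ => hP0 x' y) (Finset.mem_univ x))
  have hratio : (∑ x', P x' y) / P x y = Real.exp (condH P) := by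
    rw [← log_div_eq_condH_of_condV_eq_zero hP0 hV hpos,
      Real.exp_log (div_pos hmarg_pos hpos)]
  rw [div_eq_iff hpos.ne'] at hratio
  rw [hratio, Real.exp_neg, inv_mul_cancel_left₀ (Real.exp_ne_zero _)]

theorem prod_le_exp_neg_condH_pow_mul_prod_marginal (hP0 : ∀ x y, 0 ≤ P x y)
    (hV : condV P = 0) {n : ℕ} (xs : Fin n → X) (ys : Fin n → Y) :
    ∏ i, P (xs i) (ys i) ≤ Real.exp (-condH P) ^ n * ∏ i, ∑ x', P x' (ys i) := by
  calc ∏ i, P (xs i) (ys i)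
      ≤ ∏ i, Real.exp (-condH P) * ∑ x', P x' (ys i) :=
        Finset.prod_le_prod (fun i _ => hP0 _ _)
          fun i _ => le_exp_neg_condH_mul_marginal hP0 hV _ _
    _ = Real.exp (-condH P) ^ n * ∏ i, ∑ x', P x' (ys i) := by
        rw [Finset.prod_mul_distrib, Fin.prod_const]

end ZeroVariance

theorem converse_IR_zero_variance_general {X Y M : Type*} [Fintype X] [Fintype Y] [Fintype M]
    (n : ℕ) (ε : ℝ) (hε1 : ε < 1)
    (P : X → Y → ℝ) (hP0 : ∀ x y, 0 ≤ P x y) (hP1 : ∑ x, ∑ y, P x y = 1)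
    (hV : condV P = 0)
    (e : (Fin n → X) → M → ℝ) (he0 : ∀ xs m, 0 ≤ e xs m) (he1 : ∀ xs, ∑ m, e xs m = 1)
    (d : (Fin n → Y) → M → (Fin n → X) → ℝ) (hd0 : ∀ ys m xs, 0 ≤ d ys m xs)
    (hd1 : ∀ ys m, ∑ xs, d ys m xs = 1)
    (hcorrect : 1 - ε ≤ ∑ xs : Fin n → X, ∑ ys : Fin n → Y, ∑ m : M,
      (∏ i, P (xs i) (ys i)) * e xs m * d ys m xs) :
    n * condH P + Real.log (1 - ε) ≤ Real.log (Fintype.card M) := by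
  have hmarg_sum : ∑ ys : Fin n → Y, ∏ i, ∑ x', P x' (ys i) = 1 := by
    rw [← Fintype.sum_pow (fun y => ∑ x', P x' y), Finset.sum_comm, hP1, one_pow]
  have hsuccess : 1 - ε ≤ Real.exp (-condH P) ^ n * Fintype.card M :=
    hcorrect.trans <| successProb_le_mul_card _ _ _
      (fun _ _ => Finset.prod_nonneg fun i _ => hP0 _ _)
      (prod_le_exp_neg_condH_pow_mul_prod_marginal hP0 hV) hmarg_sum e he0 he1 d hd0 hd1
  have hε : 0 < 1 - ε := sub_pos.mpr hε1
  have hM : 0 < (Fintype.card M : ℝ) := pos_of_mul_pos_right (hε.trans_le hsuccess) (by positivity)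
  calc n * condH P + Real.log (1 - ε)
      ≤ n * condH P + Real.log (Real.exp (-condH P) ^ n * Fintype.card M) := by gcongr
    _ = Real.log (Fintype.card M) := by
        rw [Real.log_mul (by positivity) hM.ne', Real.log_pow, Real.log_exp]
        ring

/-- deterministic-case converse. If `V(X|Y)_P = 0`, then any
ε-correct one-way IR code on the n-fold i.i.d. distribution `(P_{XY})^{×n}`
satisfies `log|M| ≥ n H(X|Y)_P + log(1-ε)`. -/
theorem converse_IR_zero_variance {X Y M : Type*} [Fintype X] [Fintype Y] [Fintype M]
    (n : ℕ) (ε : ℝ) (hε0 : 0 < ε) (hε1 : ε < 1)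
    (P : X → Y → ℝ) (hP0 : ∀ x y, 0 ≤ P x y) (hP1 : ∑ x, ∑ y, P x y = 1)
    (hV : condV P = 0)
    (e : (Fin n → X) → M → ℝ) (he0 : ∀ xs m, 0 ≤ e xs m) (he1 : ∀ xs, ∑ m, e xs m = 1)
    (d : (Fin n → Y) → M → (Fin n → X) → ℝ) (hd0 : ∀ ys m xs, 0 ≤ d ys m xs)
    (hd1 : ∀ ys m, ∑ xs, d ys m xs = 1)
    (hcorrect : 1 - ε ≤ ∑ xs : Fin n → X, ∑ ys : Fin n → Y, ∑ m : M,
      (∏ i, P (xs i) (ys i)) * e xs m * d ys m xs) :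
    n * condH P + Real.log (1 - ε) ≤ Real.log (Fintype.card M) :=
  converse_IR_zero_variance_general n ε hε1 P hP0 hP1 hV e he0 he1 d hd0 hd1 hcorrect
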